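/- arXiv:2406.05480 — 11 statements merged into one kernel-verified Lean document; each statement's English description precedes it below -/
import Mathlib

section
/- Let X be a Priestley space and let V(X) be the set of all nonempty closed subsets of X, equipped with the Vietoris topology. Then the set CC(X) of nonempty closed chains of X (i.e., those elements of V(X) that are totally ordered by the order of X) is a closed subset of V(X). -/
open Set TopologicalSpace

/-- The set of nonempty closed subsets of `X`. -/
def VX (X : Type*) [TopologicalSpace X] : Set (Set X) := {F | F.Nonempty ∧ IsClosed F}

/-- The Vietoris topology on `V(X)`, generated by the subbasis
`{F | F ⊆ V}` and `{F | F ∩ V ≠ ∅}` for `V` clopen. -/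
instance vietorisTop (X : Type*) [TopologicalSpace X] : TopologicalSpace ↥(VX X) :=
  generateFrom {S | ∃ V : Set X, IsClopen V ∧
    (S = {F : ↥(VX X) | (F : Set X) ⊆ V} ∨ S = {F : ↥(VX X) | ((F : Set X) ∩ V).Nonempty})}

/-- The set `CC(X)` of nonempty closed chains, viewed inside `V(X)`, is closed in the
Vietoris topology. -/
theorem stmt0 (X : Type*) [TopologicalSpace X] [PartialOrder X] [CompactSpace X]
    [PriestleySpace X] :
    IsClosed {F : ↥(VX X) | IsChain (· ≤ ·) (F : Set X)} := by
  rw [← isOpen_compl_iff, isOpen_iff_forall_mem_open]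
  rintro F hF
  simp only [mem_compl_iff, mem_setOf_eq, IsChain, Set.Pairwise] at hF
  push_neg at hF
  obtain ⟨x, hx, y, hy, hne, hxy, hyx⟩ := hF
  obtain ⟨U, hU, hUup, hxU, hyU⟩ := exists_isClopen_upper_of_not_le hxy
  obtain ⟨W, hW, hWup, hyW, hxW⟩ := exists_isClopen_upper_of_not_le hyx
  refine ⟨{G : ↥(VX X) | ((G : Set X) ∩ (U \ W)).Nonempty} ∩
      {G : ↥(VX X) | ((G : Set X) ∩ (W \ U)).Nonempty}, ?_, ?_, ?_⟩
  · rintro G ⟨⟨a, haG, haU, haW⟩, ⟨b, hbG, hbW, hbU⟩⟩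
    simp only [mem_compl_iff, mem_setOf_eq] at *
    intro hchain
    have hab : a ≠ b := fun h => hbU (h ▸ haU)
    rcases hchain haG hbG hab with h | h
    · exact hbU (hUup h haU)
    · exact haW (hWup h hbW)
  · exact TopologicalSpace.GenerateOpen.inter _ _
      (.basic _ ⟨U \ W, hU.diff hW, Or.inr rfl⟩)
      (.basic _ ⟨W \ U, hW.diff hU, Or.inr rfl⟩)
  · exact ⟨⟨x, hx, hxU, hxW⟩, ⟨y, hy, hyW, hyU⟩⟩
end

section
/- Let X be a Priestley space. Then CC(X), equipped with the Vietoris topology, is a Stone space: it is compact, Hausdorff, and zero-dimensional. -/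
open Set TopologicalSpace

/-- The set of nonempty closed chains of a Priestley space `X`. -/
def CC (X : Type*) [TopologicalSpace X] [Preorder X] : Set (Set X) :=
  {C | C.Nonempty ∧ IsClosed C ∧ IsChain (· ≤ ·) C}

variable {X : Type*} [TopologicalSpace X] [Preorder X]

/-- `□A = {C ∈ CC(X) | C ⊆ A}`. -/
def ccBox (A : Set X) : Set ↥(CC X) := {C | (C : Set X) ⊆ A}

/-- `◇A = {C ∈ CC(X) | C ∩ A ≠ ∅}`. -/
def ccDia (A : Set X) : Set ↥(CC X) := {C | ((C : Set X) ∩ A).Nonempty}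

/-- The Vietoris topology on `CC X`, generated by the subbasis `{□V, ◇V | V clopen}`. -/
instance ccTop : TopologicalSpace ↥(CC X) :=
  generateFrom {S | ∃ V : Set X, IsClopen V ∧ (S = ccBox V ∨ S = ccDia V)}

/-- The order `⊴` on closed chains: `C₁ ⊴ C₂` iff `C₂ ⊆ C₁` and `C₂` is an upset in `C₁`. -/
def lec (C₁ C₂ : Set X) : Prop :=
  C₂ ⊆ C₁ ∧ ∀ x ∈ C₂, ∀ y ∈ C₁, x ≤ y → y ∈ C₂

-- auxiliary
def ccSub (X : Type*) [TopologicalSpace X] [Preorder X] : Set (Set ↥(CC X)) :=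
  {S | ∃ V : Set X, IsClopen V ∧ (S = ccBox V ∨ S = ccDia V)}

lemma ccTop_eq : (ccTop : TopologicalSpace ↥(CC X)) = generateFrom (ccSub X) := rfl

lemma compl_ccBox (V : Set X) : (ccBox V)ᶜ = ccDia Vᶜ := by
  ext C
  simp [ccBox, ccDia, Set.inter_compl_nonempty_iff]

lemma compl_ccDia (V : Set X) : (ccDia V)ᶜ = ccBox Vᶜ := by
  ext C
  simp [ccBox, ccDia, Set.not_nonempty_iff_eq_empty, Set.subset_compl_iff_disjoint_right,
    Set.disjoint_iff_inter_eq_empty]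

lemma isOpen_ccBox {V : Set X} (hV : IsClopen V) : IsOpen (ccBox V : Set ↥(CC X)) :=
  TopologicalSpace.GenerateOpen.basic _ ⟨V, hV, Or.inl rfl⟩

lemma isOpen_ccDia {V : Set X} (hV : IsClopen V) : IsOpen (ccDia V : Set ↥(CC X)) :=
  TopologicalSpace.GenerateOpen.basic _ ⟨V, hV, Or.inr rfl⟩

lemma isClopen_ccBox {V : Set X} (hV : IsClopen V) : IsClopen (ccBox V : Set ↥(CC X)) :=
  ⟨by rw [← isOpen_compl_iff, compl_ccBox]; exact isOpen_ccDia hV.compl, isOpen_ccBox hV⟩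

lemma isClopen_ccDia {V : Set X} (hV : IsClopen V) : IsClopen (ccDia V : Set ↥(CC X)) :=
  ⟨by rw [← isOpen_compl_iff, compl_ccDia]; exact isOpen_ccBox hV.compl, isOpen_ccDia hV⟩

lemma sepPt {Y : Type*} [TopologicalSpace Y] [PartialOrder Y] [PriestleySpace Y]
    {x y : Y} (h : x ≠ y) : ∃ V : Set Y, IsClopen V ∧ x ∈ V ∧ y ∉ V := by
  obtain ⟨U, hU, _, hx, hy⟩ := exists_isClopen_upper_or_lower_of_ne h
  exact ⟨U, hU, hx, hy⟩

lemma sepClosed {Y : Type*} [TopologicalSpace Y] [PartialOrder Y] [CompactSpace Y]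
    [PriestleySpace Y] {K : Set Y} (hK : IsClosed K) {x : Y} (hx : x ∉ K) :
    ∃ V : Set Y, IsClopen V ∧ x ∈ V ∧ Disjoint V K := by
  have h : ∀ y : K, ∃ W : Set Y, IsClopen W ∧ (y : Y) ∈ W ∧ x ∉ W := by
    intro y
    exact sepPt (fun he => hx (he ▸ y.2))
  choose W hW hyW hxW using h
  obtain ⟨t, ht⟩ := hK.isCompact.elim_finite_subcover W (fun y => (hW y).isOpen)
    (fun z hz => mem_iUnion.2 ⟨⟨z, hz⟩, hyW ⟨z, hz⟩⟩)
  refine ⟨(⋃ y ∈ t, W y)ᶜ, (isClopen_biUnion_finset fun y _ => hW y).compl, ?_, ?_⟩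
  · simp only [mem_compl_iff, mem_iUnion]
    rintro ⟨y, -, hy⟩
    exact hxW y hy
  · exact disjoint_compl_left.mono_right ht

/-- `CC(X)` with the Vietoris topology is a Stone space: compact, Hausdorff, and
zero-dimensional (the clopen sets form a topological basis). -/
theorem stmt1 (X : Type*) [TopologicalSpace X] [PartialOrder X] [CompactSpace X]
    [PriestleySpace X] :
    CompactSpace ↥(CC X) ∧ T2Space ↥(CC X) ∧
      IsTopologicalBasis {S : Set ↥(CC X) | IsClopen S} := by
  have hsub : ∀ S ∈ ccSub X, IsClopen S := by
    rintro S ⟨V, hV, rfl | rfl⟩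
    exacts [isClopen_ccBox hV, isClopen_ccDia hV]
  have hbasis : IsTopologicalBasis {S : Set ↥(CC X) | IsClopen S} := by
    refine isTopologicalBasis_of_isOpen_of_nhds (fun _ h => h.isOpen) ?_
    intro a U haU hU
    have hb := isTopologicalBasis_of_subbasis (ccTop_eq (X := X))
    obtain ⟨B, ⟨f, ⟨hfin, hfs⟩, rfl⟩, haB, hBU⟩ := hb.exists_subset_of_mem_open haU hU
    refine ⟨⋂₀ f, ?_, haB, hBU⟩
    rw [sInter_eq_biInter]
    exact hfin.isClopen_biInter fun s hs => hsub s (hfs hs)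
  have hsep2 : ∀ C₁ C₂ : ↥(CC X), ∀ x : X, x ∈ (C₁ : Set X) → x ∉ (C₂ : Set X) →
      ∃ u v : Set ↥(CC X), IsOpen u ∧ IsOpen v ∧ C₁ ∈ u ∧ C₂ ∈ v ∧ Disjoint u v := by
    intro C₁ C₂ x hx1 hx2
    obtain ⟨V, hV, hxV, hdis⟩ := sepClosed C₂.2.2.1 hx2
    refine ⟨ccDia V, ccBox Vᶜ, isOpen_ccDia hV, isOpen_ccBox hV.compl,
      ⟨x, hx1, hxV⟩, Set.subset_compl_iff_disjoint_right.mpr hdis.symm, ?_⟩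
    refine Set.disjoint_left.mpr ?_
    rintro C ⟨a, haC, haV⟩ hC'
    exact hC' haC haV
  have hT2 : T2Space ↥(CC X) := by
    constructor
    intro C₁ C₂ hne
    have hne' : (C₁ : Set X) ≠ (C₂ : Set X) := fun h => hne (Subtype.ext h)
    by_cases hss : (C₁ : Set X) ⊆ (C₂ : Set X)
    · have : ¬(C₂ : Set X) ⊆ (C₁ : Set X) := fun h => hne' (hss.antisymm h)
      obtain ⟨x, hx2, hx1⟩ := Set.not_subset.mp this
      obtain ⟨u, v, hu, hv, hC2, hC1, hd⟩ := hsep2 C₂ C₁ x hx2 hx1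
      exact ⟨v, u, hv, hu, hC1, hC2, hd.symm⟩
    · obtain ⟨x, hx1, hx2⟩ := Set.not_subset.mp hss
      exact hsep2 C₁ C₂ x hx1 hx2
  have hcomp : CompactSpace ↥(CC X) := by
    constructor
    rw [isCompact_iff_ultrafilter_le_nhds]
    intro 𝒰 _
    set D : Set X := {x | ∀ V : Set X, IsClopen V → x ∈ V → ccDia V ∈ 𝒰} with hD
    have hDclosed : IsClosed D := by
      rw [← isOpen_compl_iff, isOpen_iff_forall_mem_open]
      intro x hx
      simp only [hD, mem_compl_iff, mem_setOf_eq, not_forall, exists_prop] at hx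
      obtain ⟨V, hV, hxV, hnV⟩ := hx
      exact ⟨V, fun y hyV hyD => hnV (hyD V hV hyV), hV.isOpen, hxV⟩
    have hDne : D.Nonempty := by
      by_contra hne
      rw [Set.not_nonempty_iff_eq_empty] at hne
      have h : ∀ x : X, ∃ V : Set X, IsClopen V ∧ x ∈ V ∧ ccDia V ∉ 𝒰 := by
        intro x
        have hx : x ∉ D := hne ▸ notMem_empty x
        simp only [hD, mem_setOf_eq, not_forall, exists_prop] at hx
        exact hx
      choose V hV hxV hnV using h
      obtain ⟨t, ht⟩ := isCompact_univ.elim_finite_subcover V (fun x => (hV x).isOpen)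
        (fun x _ => mem_iUnion.2 ⟨x, hxV x⟩)
      have hU : (⋃ x ∈ (t : Set X), ccDia (V x)) ∈ 𝒰 := by
        refine Filter.mem_of_superset Filter.univ_mem ?_
        rintro C -
        obtain ⟨a, haC⟩ := C.2.1
        obtain ⟨x, hxt, haV⟩ := mem_iUnion₂.1 (ht (mem_univ a))
        exact mem_iUnion₂.2 ⟨x, hxt, ⟨a, haC, haV⟩⟩
      obtain ⟨x, -, hx⟩ := (Ultrafilter.finite_biUnion_mem_iff t.finite_toSet).1 hU
      exact hnV x hx
    have hDchain : IsChain (· ≤ ·) D := by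
      intro x hx y hy hxy
      by_contra hcon
      push_neg at hcon
      have hx' : ∀ V : Set X, IsClopen V → x ∈ V → ccDia V ∈ 𝒰 := hx
      have hy' : ∀ V : Set X, IsClopen V → y ∈ V → ccDia V ∈ 𝒰 := hy
      obtain ⟨U, hU, hUup, hxU, hyU⟩ := exists_isClopen_upper_of_not_le hcon.1
      obtain ⟨U', hU', hU'up, hyU', hxU'⟩ := exists_isClopen_upper_of_not_le hcon.2
      have h1 : ccDia (U ∩ U'ᶜ) ∈ 𝒰 := hx' _ (hU.inter hU'.compl) ⟨hxU, hxU'⟩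
      have h2 : ccDia (U' ∩ Uᶜ) ∈ 𝒰 := hy' _ (hU'.inter hU.compl) ⟨hyU', hyU⟩
      obtain ⟨C, hC1, hC2⟩ := 𝒰.nonempty_of_mem (Filter.inter_mem h1 h2)
      obtain ⟨a, haC, haU, haU'⟩ := hC1
      obtain ⟨b, hbC, hbU', hbU⟩ := hC2
      have hab : a ≠ b := fun h => hbU (h ▸ haU)
      rcases C.2.2.2 haC hbC hab with h | h
      · exact hbU (hUup h haU)
      · exact haU' (hU'up h hbU')
    refine ⟨⟨D, hDne, hDclosed, hDchain⟩, mem_univ _, ?_⟩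
    have key : (𝒰 : Filter ↥(CC X)) ≤
        @nhds _ (generateFrom (ccSub X)) ⟨D, hDne, hDclosed, hDchain⟩ := by
      rw [nhds_generateFrom]
      refine le_iInf₂ fun s hs => Filter.le_principal_iff.2 ?_
      obtain ⟨hCs, V, hV, rfl | rfl⟩ := hs
      · -- s = ccBox V
        have hDV : D ⊆ V := hCs
        by_contra hn
        have h1 : ccDia Vᶜ ∈ 𝒰 := by
          rw [← compl_ccBox]; exact Ultrafilter.compl_mem_iff_notMem.2 hn
        have h : ∀ x : ↥(Vᶜ), ∃ Wx : Set X, IsClopen Wx ∧ (x : X) ∈ Wx ∧ ccDia Wx ∉ 𝒰 := by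
          intro x
          have hxD : (x : X) ∉ D := fun h => x.2 (hDV h)
          simp only [hD, mem_setOf_eq, not_forall, exists_prop] at hxD
          exact hxD
        choose W hW hxW hnW using h
        obtain ⟨t, ht⟩ := (hV.compl.isClosed.isCompact).elim_finite_subcover W
          (fun x => (hW x).isOpen) (fun z hz => mem_iUnion.2 ⟨⟨z, hz⟩, hxW _⟩)
        have hU : (⋃ x ∈ (t : Set ↥(Vᶜ)), ccDia (W x)) ∈ 𝒰 := by
          refine Filter.mem_of_superset h1 ?_
          rintro C ⟨a, haC, haV⟩
          obtain ⟨x, hxt, haW⟩ := mem_iUnion₂.1 (ht haV)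
          exact mem_iUnion₂.2 ⟨x, hxt, a, haC, haW⟩
        obtain ⟨x, -, hx⟩ := (Ultrafilter.finite_biUnion_mem_iff t.finite_toSet).1 hU
        exact hnW x hx
      · -- s = ccDia V
        obtain ⟨x, hxD, hxV⟩ := hCs
        have hx' : ∀ V : Set X, IsClopen V → x ∈ V → ccDia V ∈ 𝒰 := hxD
        exact hx' V hV hxV
    exact key
  exact ⟨hcomp, hT2, hbasis⟩
end

section
/- Let X be a Priestley space and let C₁, C₂ be nonempty closed chains of X. Then C₁ ⊴ C₂ if and only if there exists x ∈ C₁ such that C₂ = ↑x ∩ C₁, where ↑x = {y ∈ X | x ≤ y}. -/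
open Set TopologicalSpace

variable {X : Type*} [TopologicalSpace X] [Preorder X]

theorem priestley_isClosed_Iic {Y : Type*} [TopologicalSpace Y] [Preorder Y]
    [PriestleySpace Y] (y : Y) : IsClosed (Iic y) := by
  rw [← isOpen_compl_iff]
  refine isOpen_iff_forall_mem_open.2 fun x hx => ?_
  obtain ⟨U, hU, hUup, hxU, hyU⟩ := exists_isClopen_upper_of_not_le hx
  exact ⟨U, fun z hz hzy => hyU (hUup hzy hz), hU.isOpen, hxU⟩

/-- `C₁ ⊴ C₂` iff `C₂ = ↑x ∩ C₁` for some `x ∈ C₁`. -/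
theorem stmt3 (X : Type*) [TopologicalSpace X] [PartialOrder X] [CompactSpace X]
    [PriestleySpace X] (C₁ C₂ : Set X) (h₁ : C₁ ∈ CC X) (h₂ : C₂ ∈ CC X) :
    lec C₁ C₂ ↔ ∃ x ∈ C₁, C₂ = Ici x ∩ C₁ := by
  obtain ⟨hne₂, hcl₂, hch₂⟩ := h₂
  constructor
  · rintro ⟨hsub, hup⟩
    -- C₂ has a minimum
    have : Nonempty C₂ := hne₂.to_subtype
    have hmin : (⋂ y : C₂, (C₂ ∩ Iic (y : X))).Nonempty := by
      apply IsCompact.nonempty_iInter_of_directed_nonempty_isCompact_isClosed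
      · rintro ⟨a, ha⟩ ⟨b, hb⟩
        rcases eq_or_ne a b with rfl | hab
        · exact ⟨⟨a, ha⟩, le_refl _, le_refl _⟩
        rcases hch₂ ha hb hab with h | h
        · exact ⟨⟨a, ha⟩, le_refl _, fun z hz => ⟨hz.1, hz.2.trans h⟩⟩
        · exact ⟨⟨b, hb⟩, fun z hz => ⟨hz.1, hz.2.trans h⟩, le_refl _⟩
      · exact fun y => ⟨y, y.2, le_refl _⟩
      · exact fun y => (hcl₂.inter (priestley_isClosed_Iic _)).isCompact
      · exact fun y => hcl₂.inter (priestley_isClosed_Iic _)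
    obtain ⟨x, hx⟩ := hmin
    simp only [mem_iInter, mem_inter_iff, mem_Iic, Subtype.forall] at hx
    have hxC₂ : x ∈ C₂ := (hx _ hne₂.choose_spec).1
    refine ⟨x, hsub hxC₂, ?_⟩
    ext z
    constructor
    · intro hz
      exact ⟨(hx z hz).2, hsub hz⟩
    · rintro ⟨hxz, hzC₁⟩
      exact hup x hxC₂ z hzC₁ hxz
  · rintro ⟨x, hxC₁, rfl⟩
    refine ⟨inter_subset_right, fun a ha y hy hay => ⟨le_trans ha.1 hay, hy⟩⟩
end

section
/- Let X be a Priestley space. Then the relation ⊴ is a partial order on CC(X), and (CC(X), ⊴) is a root system: for every C ∈ CC(X), the set {K ∈ CC(X) | C ⊴ K} is totally ordered by ⊴. -/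
open Set TopologicalSpace

variable {X : Type*} [TopologicalSpace X] [Preorder X]

/-- `⊴` is a partial order on `CC(X)` and `(CC(X), ⊴)` is a root system. -/
theorem stmt4 (X : Type*) [TopologicalSpace X] [PartialOrder X] [CompactSpace X]
    [PriestleySpace X] :
    (∀ C ∈ CC X, lec C C) ∧
    (∀ C₁ ∈ CC X, ∀ C₂ ∈ CC X, lec C₁ C₂ → lec C₂ C₁ → C₁ = C₂) ∧
    (∀ C₁ ∈ CC X, ∀ C₂ ∈ CC X, ∀ C₃ ∈ CC X, lec C₁ C₂ → lec C₂ C₃ → lec C₁ C₃) ∧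
    (∀ C ∈ CC X, IsChain (fun K₁ K₂ : Set X => lec K₁ K₂) {K | K ∈ CC X ∧ lec C K}) := by
  refine ⟨fun C _ => ⟨subset_rfl, fun x hx y hy _ => hy⟩,
    fun C₁ _ C₂ _ h12 h21 => Subset.antisymm h21.1 h12.1,
    fun C₁ _ C₂ _ C₃ _ h12 h23 =>
      ⟨h23.1.trans h12.1, fun x hx y hy hxy => h23.2 x hx y (h12.2 x (h23.1 hx) y hy hxy) hxy⟩,
    fun C hC K₁ hK₁ K₂ hK₂ hne => ?_⟩
  obtain ⟨hK₁c, hs₁, hu₁⟩ := hK₁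
  obtain ⟨hK₂c, hs₂, hu₂⟩ := hK₂
  by_cases h : K₂ ⊆ K₁
  · exact Or.inl ⟨h, fun x hx y hy hxy => hu₂ x hx y (hs₁ hy) hxy⟩
  · right
    refine ⟨fun z hz => ?_, fun x hx y hy hxy => hu₁ x hx y (hs₂ hy) hxy⟩
    obtain ⟨w, hw, hwn⟩ := not_subset.mp h
    rcases eq_or_ne w z with rfl | hwz
    · exact (hwn hz).elim
    rcases hC.2.2 (hs₂ hw) (hs₁ hz) hwz with hle | hle
    · exact hu₂ w hw z (hs₁ hz) hle
    · exact (hwn (hu₁ z hz w (hs₂ hw) hle)).elim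
end

section
/- Let X be a Priestley space, A ⊆ X, D a downset of X, and U an upset of X such that U ∩ D ⊆ A. Then ⇓(□A ∩ ◇(U ∩ D)) = □(A ∪ D) ∩ ◇(U ∩ D), where ⇓𝒜 = {C ∈ CC(X) | ∃ K ∈ 𝒜, C ⊴ K} denotes the ⊴-downset generated by 𝒜 ⊆ CC(X). -/
open Set TopologicalSpace

variable {X : Type*} [TopologicalSpace X] [Preorder X]

/-- The `⊴`-downset generated by a collection of closed chains. -/
def ccDown (𝒜 : Set ↥(CC X)) : Set ↥(CC X) := {C | ∃ K ∈ 𝒜, lec (C : Set X) (K : Set X)}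

lemma isClosed_Ici_priestley {Y : Type*} [TopologicalSpace Y] [Preorder Y] [PriestleySpace Y]
    (c : Y) : IsClosed (Ici c) := by
  rw [← isOpen_compl_iff, isOpen_iff_forall_mem_open]
  intro y hy
  obtain ⟨V, hV, hVup, hcV, hyV⟩ := exists_isClopen_upper_of_not_le (hy : ¬ c ≤ y)
  exact ⟨Vᶜ, fun z hz hz' => hz (hVup hz' hcV), hV.compl.isOpen, hyV⟩

/-- If `D` is a downset, `U` an upset, and `U ∩ D ⊆ A`, then
`⇓(□A ∩ ◇(U ∩ D)) = □(A ∪ D) ∩ ◇(U ∩ D)`. -/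
theorem stmt5 (X : Type*) [TopologicalSpace X] [PartialOrder X] [CompactSpace X]
    [PriestleySpace X] (A D U : Set X) (hD : IsLowerSet D) (hU : IsUpperSet U)
    (hUD : U ∩ D ⊆ A) :
    ccDown (ccBox A ∩ ccDia (U ∩ D)) = ccBox (A ∪ D) ∩ ccDia (U ∩ D) := by
  ext C
  obtain ⟨Cne, Ccl, Cch⟩ := C.2
  constructor
  · rintro ⟨K, ⟨hKA, k, hkK, hkU, hkD⟩, hKC, hKup⟩
    refine ⟨fun x hx => ?_, k, hKC hkK, hkU, hkD⟩
    rcases eq_or_ne x k with rfl | hne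
    · exact Or.inl (hKA hkK)
    · rcases Cch hx (hKC hkK) hne with h | h
      · exact Or.inr (hD h hkD)
      · exact Or.inl (hKA (hKup k hkK x hx h))
  · rintro ⟨hCAD, c, hcC, hcU, hcD⟩
    set K : Set X := (C : Set X) ∩ Ici c with hKdef
    have hKCC : K ∈ CC X :=
      ⟨⟨c, hcC, le_refl c⟩, Ccl.inter (isClosed_Ici_priestley c),
        Cch.mono inter_subset_left⟩
    refine ⟨⟨K, hKCC⟩, ⟨fun x hx => ?_, c, ⟨hcC, le_refl c⟩, hcU, hcD⟩,
      inter_subset_left, fun x hx y hy hxy => ⟨hy, hx.2.trans hxy⟩⟩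
    have hxU : x ∈ U := hU hx.2 hcU
    rcases hCAD hx.1 with h | h
    · exact h
    · exact hUD ⟨hxU, h⟩
end

section
/- Let X be a Priestley space. Then the map m : CC(X) → X sending each nonempty closed chain to its least element is continuous (with respect to the Vietoris topology on CC(X)) and order-preserving (from ⊴ to the order of X). -/
open Set TopologicalSpace

variable {X : Type*} [TopologicalSpace X] [Preorder X]

/-- In a compact Priestley space, the topology is generated by the clopen upsets and
clopen downsets. -/
lemma priestley_topology_eq (Y : Type*) [t : TopologicalSpace Y] [PartialOrder Y]
    [CompactSpace Y] [PriestleySpace Y] :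
    t = generateFrom {U : Set Y | IsClopen U ∧ (IsUpperSet U ∨ IsLowerSet U)} := by
  have hle : t ≤ generateFrom {U : Set Y | IsClopen U ∧ (IsUpperSet U ∨ IsLowerSet U)} :=
    le_generateFrom fun s hs => hs.1.isOpen
  have ht2 : @T2Space Y (generateFrom {U : Set Y | IsClopen U ∧ (IsUpperSet U ∨ IsLowerSet U)}) := by
    refine @T2Space.mk Y (generateFrom {U : Set Y | IsClopen U ∧ (IsUpperSet U ∨ IsLowerSet U)}) fun x y hxy => ?_
    obtain ⟨U, hU, hud, hx, hy⟩ := exists_isClopen_upper_or_lower_of_ne hxy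
    have h1 : (generateFrom {U : Set Y | IsClopen U ∧ (IsUpperSet U ∨ IsLowerSet U)}).IsOpen U :=
      GenerateOpen.basic _ ⟨hU, hud⟩
    have h2 : (generateFrom {U : Set Y | IsClopen U ∧ (IsUpperSet U ∨ IsLowerSet U)}).IsOpen Uᶜ :=
      GenerateOpen.basic _
        ⟨hU.compl, hud.elim (fun h => Or.inr h.compl) (fun h => Or.inl h.compl)⟩
    exact ⟨U, Uᶜ, h1, h2, hx, hy, disjoint_compl_right⟩
  have hid : @Continuous Y Y t (generateFrom {U : Set Y | IsClopen U ∧ (IsUpperSet U ∨ IsLowerSet U)}) id :=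
    (@continuous_id_iff_le Y t (generateFrom {U : Set Y | IsClopen U ∧ (IsUpperSet U ∨ IsLowerSet U)})).mpr hle
  have hcl : @IsClosedMap Y Y t (generateFrom {U : Set Y | IsClopen U ∧ (IsUpperSet U ∨ IsLowerSet U)}) id :=
    @Continuous.isClosedMap Y Y t (generateFrom {U : Set Y | IsClopen U ∧ (IsUpperSet U ∨ IsLowerSet U)}) ‹CompactSpace Y› ht2 id hid
  refine le_antisymm hle fun U hU => ?_
  have h1 : @IsClosed Y (generateFrom {U : Set Y | IsClopen U ∧ (IsUpperSet U ∨ IsLowerSet U)}) Uᶜ := by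
    have := hcl Uᶜ hU.isClosed_compl
    simpa using this
  have := h1.isOpen_compl
  simpa using this

/-- The map `m : CC(X) → X` sending each nonempty closed chain to its least element is
continuous and order-preserving from `⊴` to the order of `X`. -/
theorem stmt7 (X : Type*) [TopologicalSpace X] [PartialOrder X] [CompactSpace X]
    [PriestleySpace X] (m : ↥(CC X) → X)
    (hm : ∀ C : ↥(CC X), m C ∈ (C : Set X) ∧ ∀ x ∈ (C : Set X), m C ≤ x) :
    Continuous m ∧
      ∀ C₁ C₂ : ↥(CC X), lec (C₁ : Set X) (C₂ : Set X) → m C₁ ≤ m C₂ := by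
  constructor
  · rw [continuous_def]
    intro U hU
    rw [priestley_topology_eq X] at hU
    induction hU with
    | basic V hV =>
      obtain ⟨hVcl, hud⟩ := hV
      rcases hud with hup | hlo
      · have : m ⁻¹' V = ccBox V := by
          ext C
          constructor
          · intro hmC x hx
            exact hup ((hm C).2 x hx) hmC
          · intro h
            exact h (hm C).1
        rw [this]
        exact isOpen_generateFrom_of_mem ⟨V, hVcl, Or.inl rfl⟩
      · have : m ⁻¹' V = ccDia V := by
          ext C
          constructor
          · intro hmC
            exact ⟨m C, (hm C).1, hmC⟩
          · rintro ⟨x, hxC, hxV⟩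
            exact hlo ((hm C).2 x hxC) hxV
        rw [this]
        exact isOpen_generateFrom_of_mem ⟨V, hVcl, Or.inr rfl⟩
    | univ => exact isOpen_univ
    | inter _ _ _ _ h1 h2 => exact h1.inter h2
    | sUnion _ _ ih =>
      rw [preimage_sUnion]
      exact isOpen_biUnion ih
  · rintro C₁ C₂ ⟨hsub, _⟩
    exact (hm C₁).2 _ (hsub (hm C₂).1)
end

section
/- Let X be a Priestley space, let Y be an Esakia root system, and let f : Y → X be a continuous order-preserving map. Then there is a unique continuous p-morphism g : Y → CC(X) such that m ∘ g = f, where m : CC(X) → X sends each nonempty closed chain to its least element. Moreover, g is given by g(y) = f[↑y]. -/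
open Set TopologicalSpace

variable {X : Type*} [TopologicalSpace X] [Preorder X]

/-!
A lift `g` of `f` is forced to be `y ↦ f[↑y]`. For `x ∈ g y`, the closed chain `↑x ∩ g y` lies
`⊴`-above `g y`, so it is `g z` for some `z ≥ y`, and then `f z = m (g z) = x`; conversely, for
`z ≥ y` we have `f z = m (g z) ∈ g z ⊆ g y`.

The map `y ↦ f[↑y]` does work: `↑y` is a compact chain, so `f[↑y]` is a closed chain; the
preimages of `◇V` and `□V` are `↓f⁻¹(V)` and the complement of `↓f⁻¹(Vᶜ)`, clopen since `Y` is
Esakia; and if `f[↑y] ⊴ K`, then the least point of the compact chain `↑y ∩ f⁻¹(K)` is a `z ≥ y`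
with `f[↑z] = K`.
-/

instance PriestleySpace.toOrderClosedTopology {α : Type*} [TopologicalSpace α] [Preorder α]
    [PriestleySpace α] : OrderClosedTopology α where
  isClosed_le' := by
    rw [← isOpen_compl_iff, isOpen_iff_forall_mem_open]
    rintro ⟨x, y⟩ (hxy : ¬x ≤ y)
    obtain ⟨U, hU, hUup, hxU, hyU⟩ := exists_isClopen_upper_of_not_le hxy
    exact ⟨U ×ˢ Uᶜ, fun p hp hle => hp.2 (hUup hle hp.1), hU.isOpen.prod hU.compl.isOpen,
      hxU, hyU⟩

theorem IsChain.exists_isLeast_of_isCompact {α : Type*} [TopologicalSpace α] [Preorder α]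
    [ClosedIicTopology α] {s : Set α} (hch : IsChain (· ≤ ·) s) (hs : IsCompact s)
    (hne : s.Nonempty) : ∃ a, IsLeast s a := by
  have : Nonempty s := hne.to_subtype
  have hdir : Directed (· ⊇ ·) fun t : s => Iic (t : α) :=
    (IsChain.directedOn (r := (· ≥ ·)) hch.symm).directed_val.mono_comp (g := Iic) _
      fun _ _ h => Iic_subset_Iic.mpr h
  obtain ⟨a, has, ha⟩ : (s ∩ ⋂ t : s, Iic (t : α)).Nonempty := by
    refine nonempty_iff_ne_empty.mpr fun hempty => ?_
    obtain ⟨t, ht⟩ := hs.elim_directed_family_closed _ (fun _ => isClosed_Iic) hempty hdir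
    exact ht.subset ⟨t.2, le_rfl⟩
  exact ⟨a, has, fun b hb => mem_iInter.mp ha ⟨b, hb⟩⟩

section LiftToClosedChains

variable {α β : Type*} [Preorder α] [PartialOrder β] {f : α → β}

theorem lec_image_Ici {a b : α} (hroot : IsChain (· ≤ ·) (Ici a)) (hfm : Monotone f)
    (hab : a ≤ b) : lec (f '' Ici a) (f '' Ici b) := by
  refine ⟨image_mono (Ici_subset_Ici.mpr hab), ?_⟩
  rintro _ ⟨c, hbc, rfl⟩ _ ⟨d, had, rfl⟩ hcd
  rcases hroot.total (hab.trans hbc) had with hcd' | hdc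
  · exact ⟨d, hbc.trans hcd', rfl⟩
  · exact ⟨c, hbc, le_antisymm hcd (hfm hdc)⟩

variable [TopologicalSpace β]

theorem coe_eq_image_Ici_of_lift [ClosedIciTopology β] {m : CC β → β}
    (hm : ∀ C : CC β, IsLeast (C : Set β) (m C)) {g : α → CC β}
    (hanti : ∀ a b, a ≤ b → (g b : Set β) ⊆ g a)
    (hback : ∀ a (K : CC β), lec (g a : Set β) K → ∃ b, a ≤ b ∧ g b = K)
    (hcomm : ∀ a, m (g a) = f a) (a : α) : (g a : Set β) = f '' Ici a := by
  refine Subset.antisymm (fun x hx => ?_) ?_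
  · let K : CC β := ⟨Ici x ∩ g a, ⟨x, le_rfl, hx⟩, isClosed_Ici.inter (g a).2.2.1,
      (g a).2.2.2.mono inter_subset_right⟩
    have hxK : IsLeast (K : Set β) x := ⟨⟨le_rfl, hx⟩, fun _ hy => hy.1⟩
    obtain ⟨b, hab, hgb⟩ :=
      hback a K ⟨inter_subset_right, fun _ hy _ hz hyz => ⟨hy.1.trans hyz, hz⟩⟩
    exact ⟨b, hab, by rw [← hcomm, hgb]; exact (hm K).unique hxK⟩
  · rintro _ ⟨b, hab, rfl⟩
    exact hanti a b hab (hcomm b ▸ (hm (g b)).1)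

variable [TopologicalSpace α]

theorem image_Ici_mem_CC [CompactSpace α] [ClosedIciTopology α] [T2Space β] {a : α}
    (hroot : IsChain (· ≤ ·) (Ici a)) (hf : Continuous f) (hfm : Monotone f) :
    f '' Ici a ∈ CC β :=
  ⟨⟨f a, mem_image_of_mem f self_mem_Ici⟩, (isClosed_Ici.isCompact.image hf).isClosed,
    hfm.isChain_image hroot⟩

def liftCC [CompactSpace α] [ClosedIciTopology α] [T2Space β]
    (hroot : ∀ a : α, IsChain (· ≤ ·) (Ici a)) (hf : Continuous f) (hfm : Monotone f) (a : α) :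
    CC β :=
  ⟨f '' Ici a, image_Ici_mem_CC (hroot a) hf hfm⟩

theorem exists_image_Ici_eq_of_lec [CompactSpace α] [ClosedIciTopology α] [ClosedIicTopology α]
    {a : α} (hroot : IsChain (· ≤ ·) (Ici a)) (hf : Continuous f) (hfm : Monotone f)
    {K : Set β} (hKne : K.Nonempty) (hK : IsClosed K) (hlec : lec (f '' Ici a) K) :
    ∃ b, a ≤ b ∧ f '' Ici b = K := by
  have hne : (Ici a ∩ f ⁻¹' K).Nonempty := by
    rw [← image_inter_nonempty_iff, inter_eq_right.mpr hlec.1]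
    exact hKne
  obtain ⟨b, ⟨hab, hbK⟩, hleast⟩ := (hroot.mono inter_subset_left).exists_isLeast_of_isCompact
    (isClosed_Ici.inter (hK.preimage hf)).isCompact hne
  refine ⟨b, hab, Subset.antisymm ?_ fun x hx => ?_⟩
  · rintro _ ⟨c, hbc, rfl⟩
    exact hlec.2 _ hbK _ ⟨c, hab.trans hbc, rfl⟩ (hfm hbc)
  · obtain ⟨c, hac, rfl⟩ := hlec.1 hx
    exact ⟨c, hleast ⟨hac, hx⟩, rfl⟩

theorem continuous_liftCC [CompactSpace α] [ClosedIciTopology α] [T2Space β]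
    (hesakia : ∀ V : Set α, IsClopen V → IsClopen {x | ∃ y ∈ V, x ≤ y})
    (hroot : ∀ a : α, IsChain (· ≤ ·) (Ici a)) (hf : Continuous f) (hfm : Monotone f) :
    Continuous (liftCC hroot hf hfm) := by
  have hdia (V : Set β) : liftCC hroot hf hfm ⁻¹' ccDia V = {x | ∃ y ∈ f ⁻¹' V, x ≤ y} := by
    ext a
    simp [liftCC, ccDia, Set.Nonempty, and_comm]
  refine continuous_generateFrom_iff.mpr ?_
  rintro _ ⟨V, hV, rfl | rfl⟩
  · have hbox : liftCC hroot hf hfm ⁻¹' ccBox V = (liftCC hroot hf hfm ⁻¹' ccDia Vᶜ)ᶜ := by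
      ext a
      simp [ccBox, ccDia, inter_compl_nonempty_iff]
    rw [hbox, hdia]
    exact (hesakia _ (hV.compl.preimage hf)).compl.isOpen
  · rw [hdia]
    exact (hesakia _ (hV.preimage hf)).isOpen

end LiftToClosedChains

theorem stmt8_general (X Y : Type*) [TopologicalSpace X] [PartialOrder X]
    [PriestleySpace X] [TopologicalSpace Y] [PartialOrder Y] [CompactSpace Y]
    [PriestleySpace Y]
    (hEsa : ∀ V : Set Y, IsClopen V → IsClopen {x : Y | ∃ y ∈ V, x ≤ y})
    (hRoot : ∀ y : Y, IsChain (· ≤ ·) (Ici y))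
    (f : Y → X) (hf : Continuous f) (hfm : Monotone f)
    (m : ↥(CC X) → X)
    (hm : ∀ C : ↥(CC X), m C ∈ (C : Set X) ∧ ∀ x ∈ (C : Set X), m C ≤ x) :
    (∃! g : Y → ↥(CC X),
      Continuous g ∧
      (∀ y₁ y₂ : Y, y₁ ≤ y₂ → lec ((g y₁ : Set X)) ((g y₂ : Set X))) ∧
      (∀ y : Y, ∀ K : ↥(CC X), lec ((g y : Set X)) (K : Set X) → ∃ z, y ≤ z ∧ g z = K) ∧
      (∀ y : Y, m (g y) = f y)) ∧
    (∀ g : Y → ↥(CC X),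
      (Continuous g ∧
        (∀ y₁ y₂ : Y, y₁ ≤ y₂ → lec ((g y₁ : Set X)) ((g y₂ : Set X))) ∧
        (∀ y : Y, ∀ K : ↥(CC X), lec ((g y : Set X)) (K : Set X) → ∃ z, y ≤ z ∧ g z = K) ∧
        (∀ y : Y, m (g y) = f y)) →
      ∀ y : Y, (g y : Set X) = f '' Ici y) := by
  have hleast : ∀ C : CC X, IsLeast (C : Set X) (m C) := hm
  refine ⟨⟨liftCC hRoot hf hfm, ⟨continuous_liftCC hEsa hRoot hf hfm,
    fun _ _ => lec_image_Ici (hRoot _) hfm, fun y K hK => ?_, fun y => ?_⟩,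
    fun g ⟨_, hmono, hback, hcomm⟩ => funext fun y => Subtype.ext ?_⟩,
    fun g ⟨_, hmono, hback, hcomm⟩ =>
      coe_eq_image_Ici_of_lift hleast (fun a b hab => (hmono a b hab).1) hback hcomm⟩
  · obtain ⟨z, hyz, hz⟩ := exists_image_Ici_eq_of_lec (hRoot y) hf hfm K.2.1 K.2.2.1 hK
    exact ⟨z, hyz, Subtype.ext hz⟩
  · exact (hleast _).unique (hfm.map_isLeast isLeast_Ici)
  · exact coe_eq_image_Ici_of_lift hleast (fun a b hab => (hmono a b hab).1) hback hcomm y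

/-- Universal property of `CC(X)`: every continuous order-preserving map `f : Y → X`
from an Esakia root system `Y` lifts uniquely to a continuous p-morphism
`g : Y → CC(X)` with `m ∘ g = f`; moreover `g y = f[↑y]`. -/
theorem stmt8 (X Y : Type*) [TopologicalSpace X] [PartialOrder X] [CompactSpace X]
    [PriestleySpace X] [TopologicalSpace Y] [PartialOrder Y] [CompactSpace Y]
    [PriestleySpace Y]
    (hEsa : ∀ V : Set Y, IsClopen V → IsClopen {x : Y | ∃ y ∈ V, x ≤ y})
    (hRoot : ∀ y : Y, IsChain (· ≤ ·) (Ici y))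
    (f : Y → X) (hf : Continuous f) (hfm : Monotone f)
    (m : ↥(CC X) → X)
    (hm : ∀ C : ↥(CC X), m C ∈ (C : Set X) ∧ ∀ x ∈ (C : Set X), m C ≤ x) :
    (∃! g : Y → ↥(CC X),
      Continuous g ∧
      (∀ y₁ y₂ : Y, y₁ ≤ y₂ → lec ((g y₁ : Set X)) ((g y₂ : Set X))) ∧
      (∀ y : Y, ∀ K : ↥(CC X), lec ((g y : Set X)) (K : Set X) → ∃ z, y ≤ z ∧ g z = K) ∧
      (∀ y : Y, m (g y) = f y)) ∧
    (∀ g : Y → ↥(CC X),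
      (Continuous g ∧
        (∀ y₁ y₂ : Y, y₁ ≤ y₂ → lec ((g y₁ : Set X)) ((g y₂ : Set X))) ∧
        (∀ y : Y, ∀ K : ↥(CC X), lec ((g y : Set X)) (K : Set X) → ∃ z, y ≤ z ∧ g z = K) ∧
        (∀ y : Y, m (g y) = f y)) →
      ∀ y : Y, (g y : Set X) = f '' Ici y) :=
  stmt8_general X Y hEsa hRoot f hf hfm m hm
end

section
/- Let X be a Priestley space. The maximal elements of (CC(X), ⊴) are exactly the singleton chains {x} for x ∈ X, and the map φ : X → max CC(X) sending x to {x} is a homeomorphism, where max CC(X) carries the subspace topology induced by the Vietoris topology on CC(X). -/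
open Set TopologicalSpace

variable {X : Type*} [TopologicalSpace X] [Preorder X]

section Aux

variable {Y : Type*} [TopologicalSpace Y] [PartialOrder Y] [PriestleySpace Y]

lemma priestley_isClosed_Ici (y : Y) : IsClosed (Ici y) := by
  rw [← isOpen_compl_iff, isOpen_iff_mem_nhds]
  intro z hz
  obtain ⟨U, hU, hUup, hyU, hzU⟩ := exists_isClopen_upper_of_not_le (by simpa using hz)
  refine Filter.mem_of_superset (hU.compl.isOpen.mem_nhds hzU) ?_
  intro w hw hw'
  exact hw (hUup hw' hyU)

lemma priestley_isClosed_singleton (y : Y) : IsClosed ({y} : Set Y) :=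
  isClosed_singleton

lemma priestley_totallySeparated [CompactSpace Y] : TotallySeparatedSpace Y := by
  constructor
  intro x _ y _ hxy
  obtain ⟨U, hU, _, hx, hy⟩ := exists_isClopen_upper_or_lower_of_ne hxy
  exact ⟨U, Uᶜ, hU.isOpen, hU.compl.isOpen, hx, hy, by simp [subset_def, em], disjoint_compl_right⟩

/-- Maximal elements of `(CC, ⊴)` are exactly singletons. -/
lemma max_iff_singleton [CompactSpace Y] (C : ↥(CC Y)) :
    (∀ K : ↥(CC Y), lec (C : Set Y) (K : Set Y) → K = C) ↔ ∃ x : Y, (C : Set Y) = {x} := by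
  obtain ⟨ne, cl, ch⟩ := C.2
  constructor
  · intro hmax
    obtain ⟨a, ha⟩ := ne
    refine ⟨a, ?_⟩
    apply Set.eq_singleton_iff_unique_mem.2 ⟨ha, ?_⟩
    intro b hb
    by_contra hba
    -- b ≠ a; consider the larger of the two and cut the chain
    have hcomp := ch.total hb ha
    -- take the upset piece above the bigger element
    rcases hcomp with hle | hle
    · -- b ≤ a, consider K = C ∩ Ici a ; then b ∉ K
      set K : Set Y := (C : Set Y) ∩ Ici a with hK
      have hKcc : K ∈ CC Y :=
        ⟨⟨a, ha, le_refl a⟩, cl.inter (priestley_isClosed_Ici a),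
          ch.mono inter_subset_left⟩
      have hlec : lec (C : Set Y) K := by
        refine ⟨inter_subset_left, ?_⟩
        rintro x ⟨hxC, hax⟩ y hyC hxy
        exact ⟨hyC, le_trans hax hxy⟩
      have := hmax ⟨K, hKcc⟩ hlec
      have hKC : K = (C : Set Y) := congrArg Subtype.val this
      have hbK : b ∈ K := by rw [hKC]; exact hb
      exact hba (le_antisymm hle hbK.2)
    · -- a ≤ b, consider K = C ∩ Ici b ; then a ∉ K
      set K : Set Y := (C : Set Y) ∩ Ici b with hK
      have hKcc : K ∈ CC Y :=
        ⟨⟨b, hb, le_refl b⟩, cl.inter (priestley_isClosed_Ici b),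
          ch.mono inter_subset_left⟩
      have hlec : lec (C : Set Y) K := by
        refine ⟨inter_subset_left, ?_⟩
        rintro x ⟨hxC, hbx⟩ y hyC hxy
        exact ⟨hyC, le_trans hbx hxy⟩
      have := hmax ⟨K, hKcc⟩ hlec
      have hKC : K = (C : Set Y) := congrArg Subtype.val this
      have haK : a ∈ K := by rw [hKC]; exact ha
      exact hba (le_antisymm haK.2 hle)
  · rintro ⟨x, hx⟩ K ⟨hsub, -⟩
    obtain ⟨kne, -, -⟩ := K.2
    apply Subtype.ext
    rw [hx] at hsub ⊢
    exact (Set.Nonempty.subset_singleton_iff kne).1 hsub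

end Aux

/-- The maximal elements of `(CC(X), ⊴)` are exactly the singletons, and
`x ↦ {x}` is a homeomorphism from `X` onto `max CC(X)` with the subspace topology. -/
theorem stmt14 (X : Type*) [TopologicalSpace X] [PartialOrder X] [CompactSpace X]
    [PriestleySpace X] :
    (∀ C : ↥(CC X),
      (∀ K : ↥(CC X), lec (C : Set X) (K : Set X) → K = C) ↔ ∃ x : X, (C : Set X) = {x}) ∧
    ∃ φ : X ≃ₜ {C : ↥(CC X) // ∀ K : ↥(CC X), lec (C : Set X) (K : Set X) → K = C},
      ∀ x : X, ((φ x : ↥(CC X)) : Set X) = {x} := by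
  refine ⟨max_iff_singleton, ?_⟩
  have hsing : ∀ x : X, ({x} : Set X) ∈ CC X := fun x =>
    ⟨singleton_nonempty x, isClosed_singleton, Set.Subsingleton.isChain (by simp)⟩
  set M := {C : ↥(CC X) // ∀ K : ↥(CC X), lec (C : Set X) (K : Set X) → K = C} with hM
  -- forward map
  set f : X → M := fun x =>
    ⟨⟨{x}, hsing x⟩, (max_iff_singleton _).2 ⟨x, rfl⟩⟩ with hf
  -- inverse map
  have hpt : ∀ C : M, ∃ x : X, ((C : ↥(CC X)) : Set X) = {x} := fun C =>
    (max_iff_singleton _).1 C.2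
  set g : M → X := fun C => (hpt C).choose with hg
  have hgspec : ∀ C : M, ((C : ↥(CC X)) : Set X) = {g C} := fun C => (hpt C).choose_spec
  have hleft : Function.LeftInverse g f := by
    intro x
    have := hgspec (f x)
    simp only [hf] at this
    exact (singleton_eq_singleton_iff.1 this.symm)
  have hright : Function.RightInverse g f := by
    intro C
    apply Subtype.ext; apply Subtype.ext
    exact (hgspec C).symm
  -- continuity of f
  have hfc : Continuous f := by
    apply Continuous.subtype_mk
    rw [continuous_generateFrom_iff]
    rintro S ⟨V, hV, rfl | rfl⟩
    · have : (fun x : X => (⟨{x}, hsing x⟩ : ↥(CC X))) ⁻¹' ccBox V = V := by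
        ext x; simp [ccBox, singleton_subset_iff]
      rw [this]; exact hV.isOpen
    · have : (fun x : X => (⟨{x}, hsing x⟩ : ↥(CC X))) ⁻¹' ccDia V = V := by
        ext x; simp [ccDia, singleton_inter_nonempty]
      rw [this]; exact hV.isOpen
  -- continuity of g
  have : TotallySeparatedSpace X := priestley_totallySeparated
  have hgc : Continuous g := by
    rw [continuous_def]
    intro U hU
    rw [isOpen_iff_mem_nhds]
    intro C hC
    obtain ⟨W, hW, hxW, hWU⟩ := compact_exists_isClopen_in_isOpen hU hC
    have hopen : IsOpen ((Subtype.val : M → ↥(CC X)) ⁻¹' ccDia W) := by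
      apply Continuous.isOpen_preimage continuous_subtype_val
      exact isOpen_generateFrom_of_mem ⟨W, hW, Or.inr rfl⟩
    refine Filter.mem_of_superset (hopen.mem_nhds ?_) ?_
    · show (((C : ↥(CC X)) : Set X) ∩ W).Nonempty
      rw [hgspec C]
      exact ⟨g C, rfl, hxW⟩
    · intro D hD
      have : (({g D} : Set X) ∩ W).Nonempty := by rw [← hgspec D]; exact hD
      obtain ⟨z, hz1, hz2⟩ := this
      rw [mem_singleton_iff] at hz1
      subst hz1
      exact hWU hz2
  exact ⟨⟨⟨f, g, hleft, hright⟩, hfc, hgc⟩, fun x => rfl⟩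
end

section
/- Let S be a set and let 2^S be the product of S copies of the two-element chain {0 < 1} with the discrete topology, equipped with the product topology and the componentwise order. Then 2^S is a bi-Esakia space: for every clopen subset V of 2^S, both ↑V = {x | ∃ y ∈ V, y ≤ x} and ↓V = {x | ∃ y ∈ V, x ≤ y} are clopen. -/
open Set

lemma le_closed15 (S : Type*) :
    IsClosed {p : (S → Bool) × (S → Bool) | p.1 ≤ p.2} := by
  have h : {p : (S → Bool) × (S → Bool) | p.1 ≤ p.2} =
      ⋂ i, (fun p : (S → Bool) × (S → Bool) => (p.1 i, p.2 i)) ⁻¹'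
        {q : Bool × Bool | q.1 ≤ q.2} := by
    ext p
    simp [Pi.le_def]
  rw [h]
  exact isClosed_iInter fun i =>
    (isClosed_discrete _).preimage
      (((continuous_apply i).comp continuous_fst).prodMk
        ((continuous_apply i).comp continuous_snd))

lemma ge_closed15 (S : Type*) :
    IsClosed {p : (S → Bool) × (S → Bool) | p.2 ≤ p.1} := by
  have h : {p : (S → Bool) × (S → Bool) | p.2 ≤ p.1} =
      ⋂ i, (fun p : (S → Bool) × (S → Bool) => (p.1 i, p.2 i)) ⁻¹'
        {q : Bool × Bool | q.2 ≤ q.1} := by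
    ext p
    simp [Pi.le_def]
  rw [h]
  exact isClosed_iInter fun i =>
    (isClosed_discrete _).preimage
      (((continuous_apply i).comp continuous_fst).prodMk
        ((continuous_apply i).comp continuous_snd))

lemma up_closed15 (S : Type*) (V : Set (S → Bool)) (hV : IsClosed V) :
    IsClosed {x : S → Bool | ∃ y ∈ V, y ≤ x} := by
  have h : {x : S → Bool | ∃ y ∈ V, y ≤ x} =
      Prod.snd '' {p : (S → Bool) × (S → Bool) | p.1 ∈ V ∧ p.1 ≤ p.2} := by
    ext x
    simp only [mem_setOf_eq, mem_image, Prod.exists]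
    constructor
    · rintro ⟨y, hy, hle⟩; exact ⟨y, x, ⟨hy, hle⟩, rfl⟩
    · rintro ⟨y, x', ⟨hy, hle⟩, rfl⟩; exact ⟨y, hy, hle⟩
  rw [h]
  have hcl : IsClosed {p : (S → Bool) × (S → Bool) | p.1 ∈ V ∧ p.1 ≤ p.2} :=
    (hV.preimage continuous_fst).inter (le_closed15 S)
  exact (hcl.isCompact.image continuous_snd).isClosed

lemma down_closed15 (S : Type*) (V : Set (S → Bool)) (hV : IsClosed V) :
    IsClosed {x : S → Bool | ∃ y ∈ V, x ≤ y} := by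
  have h : {x : S → Bool | ∃ y ∈ V, x ≤ y} =
      Prod.snd '' {p : (S → Bool) × (S → Bool) | p.1 ∈ V ∧ p.2 ≤ p.1} := by
    ext x
    simp only [mem_setOf_eq, mem_image, Prod.exists]
    constructor
    · rintro ⟨y, hy, hle⟩; exact ⟨y, x, ⟨hy, hle⟩, rfl⟩
    · rintro ⟨y, x', ⟨hy, hle⟩, rfl⟩; exact ⟨y, hy, hle⟩
  rw [h]
  have hcl : IsClosed {p : (S → Bool) × (S → Bool) | p.1 ∈ V ∧ p.2 ≤ p.1} :=
    (hV.preimage continuous_fst).inter (ge_closed15 S)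
  exact (hcl.isCompact.image continuous_snd).isClosed

lemma bool_and15 : ∀ a b : Bool, a ≤ b → (a && b) = a := by decide
lemma bool_or15 : ∀ a b : Bool, b ≤ a → (a || b) = a := by decide
lemma bool_and_le15 : ∀ a b : Bool, (a && b) ≤ b := by decide
lemma bool_le_or15 : ∀ a b : Bool, b ≤ (a || b) := by decide

lemma up_open15 (S : Type*) (V : Set (S → Bool)) (hV : IsOpen V) :
    IsOpen {x : S → Bool | ∃ y ∈ V, y ≤ x} := by
  rw [isOpen_iff_mem_nhds]
  rintro x ⟨y, hyV, hyx⟩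
  obtain ⟨I, u, hu, hsub⟩ := isOpen_pi_iff.mp hV y hyV
  have hnb : (↑I : Set S).pi (fun i => {x i}) ∈ nhds x :=
    set_pi_mem_nhds I.finite_toSet (fun i _ => by simp [nhds_discrete])
  refine Filter.mem_of_superset hnb ?_
  intro x' hx'
  refine ⟨fun i => y i && x' i, hsub ?_, fun i => bool_and_le15 _ _⟩
  intro i hi
  have h1 : x' i = x i := hx' i hi
  show (y i && x' i) ∈ u i
  rw [h1, bool_and15 _ _ (hyx i)]
  exact (hu i hi).2

lemma down_open15 (S : Type*) (V : Set (S → Bool)) (hV : IsOpen V) :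
    IsOpen {x : S → Bool | ∃ y ∈ V, x ≤ y} := by
  rw [isOpen_iff_mem_nhds]
  rintro x ⟨y, hyV, hxy⟩
  obtain ⟨I, u, hu, hsub⟩ := isOpen_pi_iff.mp hV y hyV
  have hnb : (↑I : Set S).pi (fun i => {x i}) ∈ nhds x :=
    set_pi_mem_nhds I.finite_toSet (fun i _ => by simp [nhds_discrete])
  refine Filter.mem_of_superset hnb ?_
  intro x' hx'
  refine ⟨fun i => y i || x' i, hsub ?_, fun i => bool_le_or15 _ _⟩
  intro i hi
  have h1 : x' i = x i := hx' i hi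
  show (y i || x' i) ∈ u i
  rw [h1, bool_or15 _ _ (hxy i)]
  exact (hu i hi).2

/-- `2^S` (the product of `S` copies of the two-element chain with the discrete topology,
with the product topology and componentwise order) is a bi-Esakia space: the upset and the
downset of every clopen subset are clopen. -/
theorem stmt15 (S : Type*) :
    ∀ V : Set (S → Bool), IsClopen V →
      IsClopen {x : S → Bool | ∃ y ∈ V, y ≤ x} ∧
      IsClopen {x : S → Bool | ∃ y ∈ V, x ≤ y} := by
  intro V hV
  exact ⟨⟨up_closed15 S V hV.1, up_open15 S V hV.2⟩,
         ⟨down_closed15 S V hV.1, down_open15 S V hV.2⟩⟩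
end

section
/- Let S be an infinite set and n ≥ 1 a natural number. Then every nonempty clopen subset of CC_n(2^S) contains a chain of 2^S of cardinality exactly n. -/
/-!
An open set of closed chains containing `C` contains a basic Vietoris neighbourhood, cut out by
finitely many clopen subsets of `2^S`; each of these depends on finitely many coordinates, say
those in a finite `T ⊆ S`. Any chain `D ⊇ C` each of whose elements agrees on `T` with some
element of `C` lies in that neighbourhood. Since `S` is infinite, a finite chain `C` has two
coordinates outside `T` on which all its elements agree; setting them to `1` and `0` in a
suitable element of `C` yields a new point comparable with all of `C`. Repeating this grows
`C` to a chain of exactly `n` elements without leaving the clopen set.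
-/

open Set TopologicalSpace

variable {X : Type*} [TopologicalSpace X] [Preorder X]

/-- `CC_n(X)`: the nonempty (closed) chains of `X` of cardinality at most `n`, with the
subspace topology induced by `CC(X)`. -/
abbrev CCn (X : Type*) [TopologicalSpace X] [Preorder X] (n : ℕ) : Type _ :=
  {C : ↥(CC X) // (C : Set X).encard ≤ (n : ℕ∞)}

open Filter Topology

theorem IsCompact.exists_finset_forall_eqOn_mem {ι α : Type*}
    [TopologicalSpace α] [DiscreteTopology α] {V : Set (ι → α)}
    (hc : IsCompact V) (ho : IsOpen V) :
    ∃ T : Finset ι, ∀ x ∈ V, ∀ y, EqOn x y T → y ∈ V := by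
  set W : Finset ι → Set (ι → α) := fun T => {x | ∀ y, EqOn x y T → y ∈ V}
  have hW_open (T : Finset ι) : IsOpen (W T) := by
    refine isOpen_iff_mem_nhds.mpr fun x hx => mem_of_superset
      ((isOpen_set_pi T.finite_toSet fun _ _ => isOpen_discrete {x _}).mem_nhds (by simp))
      fun z hz y hzy => hx y fun i hi => (hz i hi).symm.trans (hzy hi)
  have hV_cover : V ⊆ ⋃ T, W T := fun x hx => by
    obtain ⟨T, u, hu, hTu⟩ := isOpen_pi_iff.mp ho x hx
    exact mem_iUnion.mpr ⟨T, fun y hxy => hTu fun i hi => hxy hi ▸ (hu i hi).2⟩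
  obtain ⟨T, hT⟩ := hc.elim_directed_cover W hW_open hV_cover
    (Monotone.directed_le fun T T' hTT' x hx y hxy => hx y (hxy.mono hTT'))
  exact ⟨T, fun x hx => hT hx⟩

theorem CC.exists_finset_forall_mem_of_mem_nhds {ι α : Type*} [TopologicalSpace α]
    [DiscreteTopology α] [CompactSpace α] [Preorder α] {C : CC (ι → α)}
    {𝒰 : Set (CC (ι → α))} (h : 𝒰 ∈ 𝓝 C) :
    ∃ T : Finset ι, ∀ D : CC (ι → α), (C : Set (ι → α)) ⊆ D →
      (∀ y ∈ (D : Set (ι → α)), ∃ x ∈ (C : Set (ι → α)), EqOn x y T) → D ∈ 𝒰 := by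
  set N : Finset ι → Set (CC (ι → α)) := fun T => {D | (C : Set (ι → α)) ⊆ D ∧
    ∀ y ∈ (D : Set (ι → α)), ∃ x ∈ (C : Set (ι → α)), EqOn x y T}
  have hN_anti : Antitone N := fun T T' hTT' D hD =>
    ⟨hD.1, fun y hy => (hD.2 y hy).imp fun _ ⟨hx, hxy⟩ => ⟨hx, hxy.mono hTT'⟩⟩
  have hN_nhds : (⨅ T, 𝓟 (N T)) ≤ 𝓝 C := by
    refine tendsto_id'.mp (tendsto_nhds_generateFrom_iff.mpr ?_)
    rintro _ ⟨V, hV, rfl | rfl⟩ hCV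
    · obtain ⟨T, hT⟩ := hV.isClosed.isCompact.exists_finset_forall_eqOn_mem hV.isOpen
      refine mem_iInf_of_mem T fun D hD y hy => ?_
      obtain ⟨x, hx, hxy⟩ := hD.2 y hy
      exact hT x (hCV hx) y hxy
    · exact mem_iInf_of_mem ∅ fun D hD => hCV.mono (inter_subset_inter_left V hD.1)
  obtain ⟨T, hT⟩ := (mem_iInf_of_directed
    (monotone_principal.comp_antitone hN_anti).directed_ge 𝒰).mp (hN_nhds h)
  exact ⟨T, fun D hCD hDC => mem_principal.mp hT ⟨hCD, hDC⟩⟩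

theorem Set.Finite.exists_ne_notMem_forall_apply_eq {S β : Type*} [Infinite S] [Finite β]
    {C : Set (S → β)} (hC : C.Finite) {T : Set S} (hT : T.Finite) :
    ∃ s ∉ T, ∃ t ∉ T, s ≠ t ∧ ∀ c ∈ C, c s = c t := by
  have := hC.to_subtype
  have := hT.infinite_compl.to_subtype
  obtain ⟨⟨s, hs⟩, ⟨t, ht⟩, hst, heq⟩ :=
    Finite.exists_ne_map_eq_of_infinite fun (s : ↥Tᶜ) (c : C) => (c : S → β) s
  exact ⟨s, hs, t, ht, fun h => hst (Subtype.ext h), fun c hc => congrFun heq ⟨c, hc⟩⟩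

theorem IsChain.exists_pivot {α : Type*} [Preorder α] {C : Set α} (hC : IsChain (· ≤ ·) C)
    (hfin : C.Finite) (hne : C.Nonempty) (p : α → Prop)
    (hp : ∀ a ∈ C, ∀ b ∈ C, a ≤ b → p a → p b) :
    ∃ b ∈ C, (∀ c ∈ C, ¬ p c → c ≤ b) ∧ ∀ c ∈ C, p c → b ≤ c := by
  by_cases hU : {c ∈ C | p c}.Nonempty
  · obtain ⟨b, ⟨hbC, hpb⟩, hmin⟩ := (hfin.subset (sep_subset C p)).exists_minimal hU
    refine ⟨b, hbC, fun c hc hpc => ?_, fun c hc hpc => ?_⟩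
    · exact (hC.total hbC hc).resolve_left fun hbc => hpc (hp b hbC c hc hbc hpb)
    · exact (hC.total hbC hc).elim id fun hcb => hmin ⟨hc, hpc⟩ hcb
  · obtain ⟨b, hbC, hmax⟩ := hfin.exists_maximal hne
    refine ⟨b, hbC, fun c hc _ => ?_, fun c hc hpc => absurd ⟨c, hc, hpc⟩ hU⟩
    exact (hC.total hbC hc).elim (fun hbc => hmax hc hbc) id

theorem IsChain.exists_insert_eqOn {S : Type*} [Infinite S] {C : Set (S → Bool)}
    (hC : IsChain (· ≤ ·) C) (hfin : C.Finite) (hne : C.Nonempty) {T : Set S} (hT : T.Finite) :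
    ∃ y ∉ C, IsChain (· ≤ ·) (insert y C) ∧ ∃ b ∈ C, EqOn b y T := by
  classical
  obtain ⟨s, hs, t, ht, hst, hC_st⟩ := hfin.exists_ne_notMem_forall_apply_eq hT
  obtain ⟨b, hbC, hlow, hhigh⟩ := hC.exists_pivot hfin hne (fun c => c s = true)
    fun _ _ _ _ hcd => Bool.le_iff_imp.mp (hcd s)
  -- `y` lies between the elements of `C` vanishing at `s` and `t` and the others,
  -- and differs from all of them since `y s ≠ y t`.
  set y := Function.update (Function.update b s true) t false
  have hys : y s = true := by simp [y, hst]
  have hyt : y t = false := by simp [y]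
  have hyb : ∀ u, u ≠ s → u ≠ t → y u = b u := fun u hus hut => by simp [y, hus, hut]
  refine ⟨y, fun hy => by simpa [hys, hyt] using hC_st y hy, hC.insert fun c hc _ => ?_, b, hbC,
    fun u hu => (hyb u (ne_of_mem_of_not_mem hu hs) (ne_of_mem_of_not_mem hu ht)).symm⟩
  by_cases hcs : c s = true
  · refine Or.inl fun u => ?_
    by_cases hus : u = s; · rw [hus, hys, hcs]
    by_cases hut : u = t; · rw [hut, hyt]; exact Bool.false_le _
    rw [hyb u hus hut]; exact hhigh c hc hcs u
  · refine Or.inr fun u => ?_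
    by_cases hus : u = s; · rw [hus, hys]; exact Bool.le_true _
    by_cases hut : u = t; · rw [hut, hyt, ← hC_st c hc, Bool.eq_false_iff.mpr hcs]
    rw [hyb u hus hut]; exact hlow c hc hcs u

theorem IsChain.exists_superset_encard_eq {S : Type*} [Infinite S] {C : Set (S → Bool)}
    (hC : IsChain (· ≤ ·) C) (hne : C.Nonempty) {T : Set S} (hT : T.Finite) {n : ℕ}
    (hn : C.encard ≤ n) :
    ∃ D, C ⊆ D ∧ IsChain (· ≤ ·) D ∧ D.encard = n ∧ ∀ y ∈ D, ∃ x ∈ C, EqOn x y T := by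
  induction n with
  | zero => simp [encard_eq_zero.mp (nonpos_iff_eq_zero.mp hn)] at hne
  | succ n ih =>
    rcases eq_or_lt_of_le hn with heq | hlt
    · exact ⟨C, subset_rfl, hC, heq, fun y hy => ⟨y, hy, eqOn_refl _ _⟩⟩
    obtain ⟨D, hCD, hD, hDn, hDC⟩ := ih (Order.le_of_lt_add_one (by exact_mod_cast hlt))
    have hDfin : D.Finite := finite_of_encard_eq_coe hDn
    obtain ⟨y, hyD, hyD', b, hbD, hby⟩ := hD.exists_insert_eqOn hDfin (hne.mono hCD) hT
    obtain ⟨x, hxC, hxb⟩ := hDC b hbD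
    refine ⟨insert y D, hCD.trans (subset_insert y D), hyD', ?_, ?_⟩
    · rw [encard_insert_of_notMem hyD, hDn]; rfl
    · rintro z (rfl | hz)
      · exact ⟨x, hxC, hxb.trans hby⟩
      · exact hDC z hz

theorem stmt16_general (S : Type*) [Infinite S] (n : ℕ) :
    ∀ 𝒱 : Set (CCn (S → Bool) n), IsClopen 𝒱 → 𝒱.Nonempty →
      ∃ C ∈ 𝒱, ((C : ↥(CC (S → Bool))) : Set (S → Bool)).encard = (n : ℕ∞) := by
  rintro 𝒱 h𝒱 ⟨⟨C, hCn⟩, hC𝒱⟩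
  obtain ⟨𝒰, h𝒰, h𝒰𝒱⟩ := (mem_nhds_induced _ _ _).mp (h𝒱.isOpen.mem_nhds hC𝒱)
  obtain ⟨T, hT⟩ := CC.exists_finset_forall_mem_of_mem_nhds h𝒰
  obtain ⟨hne, -, hchain⟩ := C.2
  obtain ⟨D, hCD, hD, hDn, hDC⟩ := hchain.exists_superset_encard_eq hne T.finite_toSet hCn
  have hDmem : D ∈ CC (S → Bool) := ⟨hne.mono hCD, (finite_of_encard_eq_coe hDn).isClosed, hD⟩
  exact ⟨⟨⟨D, hDmem⟩, hDn.le⟩, h𝒰𝒱 (hT ⟨D, hDmem⟩ hCD hDC), hDn⟩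

/-- For `S` infinite and `n ≥ 1`, every nonempty clopen subset of `CC_n(2^S)` contains a
chain of `2^S` of cardinality exactly `n`. -/
theorem stmt16 (S : Type*) [Infinite S] (n : ℕ) (hn : 1 ≤ n) :
    ∀ 𝒱 : Set (CCn (S → Bool) n), IsClopen 𝒱 → 𝒱.Nonempty →
      ∃ C ∈ 𝒱, ((C : ↥(CC (S → Bool))) : Set (S → Bool)).encard = (n : ℕ∞) :=
  stmt16_general S n
end

section
/- Let X be a Priestley space and let U₁, U₂ be clopen upsets of X. Then ⇓(□U₁ \ □U₂) = ◇(U₁ \ U₂); equivalently, CC(X) \ ⇓(□U₁ \ □U₂) = □((X \ U₁) ∪ U₂), i.e., the Heyting implication □U₁ → □U₂ in the algebra of clopen ⊴-upsets of CC(X) equals □((X \ U₁) ∪ U₂). Here ⇓𝒜 = {C ∈ CC(X) | ∃ K ∈ 𝒜, C ⊴ K} denotes the ⊴-downset generated by 𝒜 ⊆ CC(X). -/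
open Set TopologicalSpace

variable {X : Type*} [TopologicalSpace X] [Preorder X]

/-- For clopen upsets `U₁, U₂` of `X`: `⇓(□U₁ \ □U₂) = ◇(U₁ \ U₂)`, and hence the
Heyting implication `□U₁ → □U₂ = CC(X) \ ⇓(□U₁ \ □U₂)` equals `□((X \ U₁) ∪ U₂)`. -/
theorem stmt18 (X : Type*) [TopologicalSpace X] [PartialOrder X] [CompactSpace X]
    [PriestleySpace X] (U₁ U₂ : Set X) (h₁ : IsClopen U₁) (hu₁ : IsUpperSet U₁)
    (h₂ : IsClopen U₂) (hu₂ : IsUpperSet U₂) :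
    ccDown (ccBox U₁ \ ccBox U₂) = ccDia (U₁ \ U₂) ∧
    univ \ ccDown (ccBox U₁ \ ccBox U₂) = ccBox (U₁ᶜ ∪ U₂) := by
  have hIci : ∀ x : X, IsClosed (Ici x) := by
    intro x
    rw [← isOpen_compl_iff, isOpen_iff_forall_mem_open]
    intro y hy
    obtain ⟨U, hU, hUup, hxU, hyU⟩ := exists_isClopen_upper_of_not_le (by simpa using hy)
    exact ⟨Uᶜ, fun z hz hxz => hz (hUup hxz hxU), hU.compl.isOpen, hyU⟩
  have key : ccDown (ccBox U₁ \ ccBox U₂) = ccDia (U₁ \ U₂) := by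
    ext C
    constructor
    · rintro ⟨K, ⟨hK1, hK2⟩, hKC, _⟩
      obtain ⟨k, hkK, hkU₂⟩ := not_subset.mp hK2
      exact ⟨k, hKC hkK, hK1 hkK, hkU₂⟩
    · rintro ⟨x, hxC, hxU₁, hxU₂⟩
      obtain ⟨hCne, hCcl, hCch⟩ := C.2
      refine ⟨⟨(C : Set X) ∩ Ici x, ⟨x, hxC, le_refl x⟩, hCcl.inter (hIci x),
        hCch.mono inter_subset_left⟩, ⟨?_, ?_⟩, inter_subset_left, ?_⟩
      · rintro y ⟨_, hxy⟩
        exact hu₁ hxy hxU₁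
      · intro h
        exact hxU₂ (h ⟨hxC, le_refl x⟩)
      · rintro a ⟨_, hxa⟩ b hbC hab
        exact ⟨hbC, hxa.trans hab⟩
  refine ⟨key, ?_⟩
  rw [key]
  ext C
  simp only [ccDia, ccBox, mem_diff, mem_univ, true_and, mem_setOf_eq]
  constructor
  · intro h y hyC
    by_cases hy : y ∈ U₂
    · exact Or.inr hy
    · exact Or.inl fun hyU₁ => h ⟨y, hyC, hyU₁, hy⟩
  · rintro h ⟨y, hyC, hy1, hy2⟩
    rcases h hyC with h' | h'
    · exact h' hy1
    · exact hy2 h'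
end
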